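/- arXiv:1602.07485 — 3 statements merged into one kernel-verified Lean document; each statement's English description precedes it below -/
import Mathlib

section
/- Let α ∈ (0,1), β > 0, and let W : ℝ → [0,∞) be nondecreasing with W(u) = 0 for u ≤ 0. Suppose there is M < ∞ such that W(x) − W(y) ≤ M (x−y)^α |log(x−y)|^{1−α} whenever −∞ < y < x ≤ 1/2. Then for 0 ≤ v < u ≤ 1/2, with I(u,v) := ∫_{[0,v]} ((u−y)^β − (v−y)^β) dW(y), one has 0 ≤ ∫_{[0,u]}(u−y)^β dW(y) − ∫_{[0,v]}(v−y)^β dW(y) ≤ I(u,v) + M (u−v)^{α+β} |log(u−v)|^{1−α}. -/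
open Set MeasureTheory

/-! The increment splits as `I(u,v) + ∫_{(v,u]} (u-y)^β dW(y)`. Both pieces are nonnegative since
`y ↦ y^β` is monotone, and on `(v,u]` the kernel is at most `(u-v)^β` while the mass
`W(u) - W(v)` is controlled by the modulus of continuity. -/

theorem setIntegral_Icc_sub_setIntegral_Icc {μ : Measure ℝ} [IsLocallyFiniteMeasure μ]
    {f g : ℝ → ℝ} (hf : Continuous f) (hg : Continuous g) {a v u : ℝ} (hav : a ≤ v)
    (hvu : v ≤ u) :
    (∫ y in Icc a u, f y ∂μ) - ∫ y in Icc a v, g y ∂μ =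
      (∫ y in Icc a v, (f y - g y) ∂μ) + ∫ y in Ioc v u, f y ∂μ := by
  have hsplit : ∫ y in Icc a u, f y ∂μ = (∫ y in Icc a v, f y ∂μ) + ∫ y in Ioc v u, f y ∂μ := by
    rw [← Icc_union_Ioc_eq_Icc hav hvu]
    exact setIntegral_union ((Iic_disjoint_Ioc le_rfl).mono_left Icc_subset_Iic_self)
      measurableSet_Ioc hf.integrableOn_Icc hf.integrableOn_Ioc
  rw [hsplit, integral_sub hf.integrableOn_Icc hg.integrableOn_Icc]
  ring

theorem StieltjesFunction.setIntegral_Ioc_le_mul (W : StieltjesFunction ℝ) {f : ℝ → ℝ}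
    {a b C : ℝ} (hab : a ≤ b) (hf : IntegrableOn f (Ioc a b) W.measure)
    (hfC : ∀ y ∈ Ioc a b, f y ≤ C) :
    ∫ y in Ioc a b, f y ∂W.measure ≤ (W b - W a) * C := by
  have hconst : ∫ _ in Ioc a b, C ∂W.measure = (W b - W a) * C := by
    rw [setIntegral_const, measureReal_def, W.measure_Ioc, smul_eq_mul,
      ENNReal.toReal_ofReal (sub_nonneg.mpr (W.mono hab))]
  rw [← hconst]
  exact setIntegral_mono_on hf (integrableOn_const (by simp [W.measure_Ioc]))
    measurableSet_Ioc hfC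

theorem continuous_const_sub_rpow {β : ℝ} (hβ : 0 ≤ β) (u : ℝ) :
    Continuous fun y : ℝ => (u - y) ^ β :=
  (continuous_const.sub continuous_id).rpow_const fun _ => Or.inr hβ

theorem stmt6_general (α β M : ℝ) (hβ : 0 < β)
    (W : StieltjesFunction ℝ)
    (hM : ∀ y x : ℝ, y < x → x ≤ 1 / 2 →
      W x - W y ≤ M * (x - y) ^ α * |Real.log (x - y)| ^ (1 - α))
    (u v : ℝ) (hv : 0 ≤ v) (hvu : v < u) (hu : u ≤ 1 / 2) :
    0 ≤ (∫ y in Set.Icc 0 u, (u - y) ^ β ∂W.measure) -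
        ∫ y in Set.Icc 0 v, (v - y) ^ β ∂W.measure ∧
    (∫ y in Set.Icc 0 u, (u - y) ^ β ∂W.measure) -
        ∫ y in Set.Icc 0 v, (v - y) ^ β ∂W.measure ≤
      (∫ y in Set.Icc 0 v, ((u - y) ^ β - (v - y) ^ β) ∂W.measure) +
        M * (u - v) ^ (α + β) * |Real.log (u - v)| ^ (1 - α) := by
  rw [setIntegral_Icc_sub_setIntegral_Icc (continuous_const_sub_rpow hβ.le u)
    (continuous_const_sub_rpow hβ.le v) hv hvu.le]
  have hI : 0 ≤ ∫ y in Icc 0 v, ((u - y) ^ β - (v - y) ^ β) ∂W.measure :=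
    setIntegral_nonneg measurableSet_Icc fun y hy => sub_nonneg.mpr <|
      Real.rpow_le_rpow (by linarith [hy.2]) (by linarith) hβ.le
  have hnear_nonneg : 0 ≤ ∫ y in Ioc v u, (u - y) ^ β ∂W.measure :=
    setIntegral_nonneg measurableSet_Ioc fun y hy => Real.rpow_nonneg (by linarith [hy.2]) β
  have hnear_le : ∫ y in Ioc v u, (u - y) ^ β ∂W.measure
      ≤ M * (u - v) ^ (α + β) * |Real.log (u - v)| ^ (1 - α) :=
    calc ∫ y in Ioc v u, (u - y) ^ β ∂W.measure ≤ (W u - W v) * (u - v) ^ β :=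
          W.setIntegral_Ioc_le_mul hvu.le (continuous_const_sub_rpow hβ.le u).integrableOn_Ioc
            fun y hy => Real.rpow_le_rpow (by linarith [hy.2]) (by linarith [hy.1]) hβ.le
      _ ≤ M * (u - v) ^ α * |Real.log (u - v)| ^ (1 - α) * (u - v) ^ β :=
          mul_le_mul_of_nonneg_right (hM v u hvu hu) (Real.rpow_nonneg (by linarith) β)
      _ = M * (u - v) ^ (α + β) * |Real.log (u - v)| ^ (1 - α) := by
          rw [Real.rpow_add (by linarith)]; ring
  exact ⟨by linarith, by linarith⟩

/-- Decomposition estimate for the increment of `u ↦ ∫_{[0,u]}(u-y)^β dW(y)` when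
`W` is nondecreasing, vanishes on `(-∞,0]`, and has the modulus of continuity
`W(x)-W(y) ≤ M(x-y)^α |log(x-y)|^{1-α}` for `y < x ≤ 1/2`. -/
theorem stmt6 (α β M : ℝ) (hα : α ∈ Set.Ioo (0:ℝ) 1) (hβ : 0 < β)
    (W : StieltjesFunction ℝ) (hW0 : ∀ u : ℝ, u ≤ 0 → W u = 0)
    (hM : ∀ y x : ℝ, y < x → x ≤ 1 / 2 →
      W x - W y ≤ M * (x - y) ^ α * |Real.log (x - y)| ^ (1 - α))
    (u v : ℝ) (hv : 0 ≤ v) (hvu : v < u) (hu : u ≤ 1 / 2) :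
    0 ≤ (∫ y in Set.Icc 0 u, (u - y) ^ β ∂W.measure) -
        ∫ y in Set.Icc 0 v, (v - y) ^ β ∂W.measure ∧
    (∫ y in Set.Icc 0 u, (u - y) ^ β ∂W.measure) -
        ∫ y in Set.Icc 0 v, (v - y) ^ β ∂W.measure ≤
      (∫ y in Set.Icc 0 v, ((u - y) ^ β - (v - y) ^ β) ∂W.measure) +
        M * (u - v) ^ (α + β) * |Real.log (u - v)| ^ (1 - α) :=
  stmt6_general α β M hβ W hM u v hv hvu hu
end

section
/- Let ξ be a positive random variable with P(ξ > t) ∼ t^{−α} ℓ(t) as t → ∞ for some α ∈ (0,1) and slowly varying ℓ, let S_0 = 0, S_n = ξ_1 + ⋯ + ξ_n with ξ_i i.i.d. copies of ξ, and ν(t) = inf{k ≥ 0 : S_k > t}. Then for every λ > 0, sup_{t≥0} E exp(λ·P(ξ > t)·ν(t)) < ∞. -/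
/-!
Chernoff's bound gives `P(S_n ≤ t) ≤ e^{st} φ(s)^n` for the Laplace transform `φ(s) = E e^{-sξ}`,
and `{ν(t) > n} ⊆ {S_n ≤ t}`, so `E e^{c ν(t)} ≤ 1 + e^{K + c}` as soon as `st ≤ K` and
`φ(s) ≤ e^{-2c}`. With `c = λ P(ξ > t)` it remains to find such an `s` for every `t` with a
common `K`. For bounded `t` a fixed large `s` works, since `φ(s) → 0`. For large `t` take
`s = 1/(lt)`: the crude bound `φ(s) ≤ exp(-(1 - e⁻¹) P(ξ > 1/s))` and the regular variation of
the tail, `P(ξ > lt) ≥ M P(ξ > t)` for small `l`, give `φ(s) ≤ e^{-2c}` with `st = 1/l`.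
-/

open Filter MeasureTheory ProbabilityTheory Finset Real Topology
open scoped ENNReal

def IsRegularlyVarying (f : ℝ → ℝ) (ρ : ℝ) : Prop :=
  ∀ l : ℝ, 0 < l → Tendsto (fun t => f (l * t) / f t) atTop (𝓝 (l ^ ρ))

lemma isRegularlyVarying_rpow (ρ : ℝ) : IsRegularlyVarying (fun t => t ^ ρ) ρ := by
  intro l hl
  refine tendsto_const_nhds.congr' ?_
  filter_upwards [eventually_gt_atTop 0] with t ht
  rw [mul_rpow hl.le ht.le, mul_div_cancel_right₀ _ (rpow_pos_of_pos ht ρ).ne']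

namespace IsRegularlyVarying

variable {f g : ℝ → ℝ} {ρ σ : ℝ}

lemma mul (hf : IsRegularlyVarying f ρ) (hg : IsRegularlyVarying g σ) :
    IsRegularlyVarying (fun t => f t * g t) (ρ + σ) := fun l hl => by
  simp_rw [mul_div_mul_comm, rpow_add hl]
  exact (hf l hl).mul (hg l hl)

lemma rpow_mul {ℓ : ℝ → ℝ} (hℓ : IsRegularlyVarying ℓ 0) (ρ : ℝ) :
    IsRegularlyVarying (fun t => t ^ ρ * ℓ t) ρ := by
  simpa using (isRegularlyVarying_rpow ρ).mul hℓ

lemma of_tendsto_div (hg : IsRegularlyVarying g ρ)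
    (hfg : Tendsto (fun t => f t / g t) atTop (𝓝 1)) : IsRegularlyVarying f ρ := fun l hl => by
  have hg_ne : ∀ᶠ t in atTop, g t ≠ 0 :=
    (hfg.eventually_ne one_ne_zero).mono fun t ht hgt => ht (by simp [hgt])
  have hfg_l := hfg.comp (tendsto_id.const_mul_atTop hl)
  have hlim := (hfg_l.mul (hg l hl)).div hfg one_ne_zero
  rw [one_mul, div_one] at hlim
  refine hlim.congr' ?_
  filter_upwards [hg_ne, (tendsto_id.const_mul_atTop hl).eventually hg_ne] with t ht hlt
  simp only [Pi.div_apply, Function.comp_apply, id] at hlt ⊢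
  rw [div_mul_div_cancel₀ hlt, div_div_div_cancel_right₀ ht]

lemma exists_mul_le_apply_mul (hf : IsRegularlyVarying f ρ) (hρ : ρ ≠ 0) (hf0 : ∀ t, 0 ≤ f t)
    (M : ℝ) : ∃ l > 0, ∀ᶠ t in atTop, M * f t ≤ f (l * t) := by
  have hM : 0 < |M| + 1 := by positivity
  refine ⟨(|M| + 1) ^ ρ⁻¹, rpow_pos_of_pos hM _, ?_⟩
  have hlim := hf _ (rpow_pos_of_pos hM ρ⁻¹)
  rw [← Real.rpow_mul hM.le, inv_mul_cancel₀ hρ, rpow_one] at hlim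
  filter_upwards [hlim.eventually_const_lt (lt_of_le_of_lt (le_abs_self M) (lt_add_one _))]
    with t ht
  rcases (hf0 t).eq_or_lt with h0 | hpos
  · rw [← h0, mul_zero]; exact hf0 _
  · exact ((lt_div_iff₀ hpos).mp ht).le

end IsRegularlyVarying

section FirstPassage

variable {Ω : Type*}

noncomputable def firstPassage (S : ℕ → Ω → ℝ) (t : ℝ) (ω : Ω) : ℕ := sInf {k | t < S k ω}

lemma le_of_lt_firstPassage {S : ℕ → Ω → ℝ} {t : ℝ} {ω : Ω} {n : ℕ}
    (hn : n < firstPassage S t ω) : S n ω ≤ t :=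
  not_lt.mp (Nat.notMem_of_lt_sInf hn)

end FirstPassage

section Probability

variable {Ω : Type*} [MeasurableSpace Ω] {P : Measure Ω} [IsProbabilityMeasure P]

lemma integrable_exp_neg_mul_of_nonneg {X : Ω → ℝ} (hX : AEMeasurable X P)
    (hX0 : ∀ᵐ ω ∂P, 0 ≤ X ω) {s : ℝ} (hs : 0 ≤ s) :
    Integrable (fun ω => exp (-s * X ω)) P := by
  refine .of_bound (hX.const_mul _).exp.aestronglyMeasurable 1 ?_
  filter_upwards [hX0] with ω hω
  rw [norm_of_nonneg (exp_pos _).le, exp_le_one_iff]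
  nlinarith

lemma tendsto_mgf_neg_atTop {X : Ω → ℝ} (hX : AEMeasurable X P) (hX0 : ∀ᵐ ω ∂P, 0 < X ω) :
    Tendsto (fun s => mgf X P (-s)) atTop (𝓝 0) := by
  have hlim := tendsto_integral_filter_of_dominated_convergence (μ := P) (l := atTop)
    (F := fun s ω => exp (-s * X ω)) (f := 0) (fun _ => 1)
    (Eventually.of_forall fun s => (hX.const_mul _).exp.aestronglyMeasurable)
    ((eventually_ge_atTop 0).mono fun s hs => by
      filter_upwards [hX0] with ω hω
      rw [norm_of_nonneg (exp_pos _).le, exp_le_one_iff]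
      nlinarith)
    (integrable_const 1)
    (by
      filter_upwards [hX0] with ω hω
      exact tendsto_exp_atBot.comp (tendsto_neg_atTop_atBot.atBot_mul_const hω))
  simpa [mgf] using hlim

lemma mgf_neg_le_exp_neg_measureReal {X : Ω → ℝ} (hX : Measurable X) (hX0 : ∀ ω, 0 ≤ X ω)
    {s : ℝ} (hs : 0 < s) :
    mgf X P (-s) ≤ exp (-((1 - exp (-1)) * P.real {ω | s⁻¹ < X ω})) := by
  set A := {ω | s⁻¹ < X ω}
  have hA : MeasurableSet A := measurableSet_lt measurable_const hX
  have hpt : ∀ ω, exp (-s * X ω) ≤ 1 - A.indicator (fun _ => 1 - exp (-1)) ω := by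
    intro ω
    by_cases hω : ω ∈ A
    · have : 1 < X ω * s := (inv_lt_iff_one_lt_mul₀ hs).mp hω
      rw [Set.indicator_of_mem hω, sub_sub_cancel, exp_le_exp]
      linarith
    · rw [Set.indicator_of_notMem hω, sub_zero, exp_le_one_iff]
      nlinarith [hX0 ω]
  calc mgf X P (-s)
      ≤ ∫ ω, (1 - A.indicator (fun _ => 1 - exp (-1)) ω) ∂P :=
        integral_mono (integrable_exp_neg_mul_of_nonneg hX.aemeasurable (.of_forall hX0) hs.le)
          ((integrable_const 1).sub ((integrable_const _).indicator hA)) hpt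
    _ = 1 - (1 - exp (-1)) * P.real A := by
        rw [integral_sub (integrable_const 1) ((integrable_const _).indicator hA),
          integral_indicator_const _ hA]
        simp [mul_comm]
    _ ≤ exp (-((1 - exp (-1)) * P.real A)) := by
        linarith [add_one_le_exp (-((1 - exp (-1)) * P.real A))]

lemma exists_forall_mgf_neg_le_exp_neg_mul_tail {X : Ω → ℝ} (hX : Measurable X)
    (hX0 : ∀ ω, 0 < X ω) {ρ : ℝ} (hreg : IsRegularlyVarying (fun t => P.real {ω | t < X ω}) ρ)
    (hρ : ρ ≠ 0) (μ : ℝ) :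
    ∃ K, ∀ t, 0 ≤ t → ∃ s, 0 ≤ s ∧ s * t ≤ K ∧
      mgf X P (-s) ≤ exp (-(μ * P.real {ω | t < X ω})) := by
  have hκ : 0 < 1 - exp (-1) := sub_pos.mpr (exp_lt_one_iff.mpr (by norm_num))
  have hφ := tendsto_mgf_neg_atTop (P := P) hX.aemeasurable (.of_forall hX0)
  obtain ⟨s₀, hφs₀, hs₀⟩ :=
    ((hφ.eventually_le_const (exp_pos (-|μ|))).and (eventually_ge_atTop 0)).exists
  obtain ⟨l, hl, hlT⟩ :=
    hreg.exists_mul_le_apply_mul hρ (fun _ => measureReal_nonneg) (μ / (1 - exp (-1)))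
  obtain ⟨T, hT⟩ := (hlT.and (eventually_gt_atTop 0)).exists_forall_of_atTop
  refine ⟨max (s₀ * T) l⁻¹, fun t ht => ?_⟩
  rcases le_or_gt t T with htT | htT
  · refine ⟨s₀, hs₀, le_max_of_le_left (by gcongr), hφs₀.trans (exp_le_exp.mpr ?_)⟩
    have h1 : P.real {ω | t < X ω} ≤ 1 := measureReal_le_one
    nlinarith [le_abs_self μ, abs_nonneg μ, measureReal_nonneg (μ := P) (s := {ω | t < X ω})]
  · obtain ⟨hμl, htpos⟩ := hT t htT.le
    have hst : (l * t)⁻¹ * t = l⁻¹ := by rw [mul_inv, mul_assoc, inv_mul_cancel₀ htpos.ne', mul_one]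
    refine ⟨(l * t)⁻¹, by positivity, le_max_of_le_right hst.le,
      (mgf_neg_le_exp_neg_measureReal hX (fun ω => (hX0 ω).le) (by positivity)).trans ?_⟩
    rw [inv_inv, exp_le_exp, neg_le_neg_iff]
    rwa [div_mul_eq_mul_div, div_le_iff₀ hκ, mul_comm _ (1 - exp (-1))] at hμl

lemma measureReal_sum_le_le_exp_mul_mgf_pow {ξ : ℕ → Ω → ℝ} (hmeas : ∀ i, Measurable (ξ i))
    (hindep : iIndepFun ξ P) (hident : ∀ i, IdentDistrib (ξ i) (ξ 0) P P) {s : ℝ}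
    (hint : Integrable (fun ω => exp (-s * ξ 0 ω)) P) (hs : 0 ≤ s) (t : ℝ) (n : ℕ) :
    P.real {ω | ∑ i ∈ range n, ξ i ω ≤ t} ≤ exp (s * t) * mgf (ξ 0) P (-s) ^ n := by
  have hmgf : mgf (∑ i ∈ range n, ξ i) P (-s) = mgf (ξ 0) P (-s) ^ n := by
    rw [hindep.mgf_sum hmeas,
      prod_eq_pow_card fun i _ => mgf_congr_of_identDistrib _ _ (hident i) _, card_range]
  have hint_sum : Integrable (fun ω => exp (-s * (∑ i ∈ range n, ξ i) ω)) P :=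
    hindep.integrable_exp_mul_sum hmeas fun i _ =>
      ((hident i).comp (measurable_const_mul (-s)).exp).integrable_iff.mpr hint
  simpa [hmgf] using measure_le_le_exp_mul_mgf t (neg_nonpos.mpr hs) hint_sum

lemma ofReal_exp_mul_natCast_eq {c : ℝ} (hc : 0 ≤ c) (k : ℕ) :
    ENNReal.ofReal (exp (c * k)) =
      1 + ENNReal.ofReal (exp c - 1) * ∑ n ∈ range k, ENNReal.ofReal (exp c) ^ n := by
  have hc1 : 0 ≤ exp c - 1 := by linarith [one_le_exp hc]
  have hgeom := geom_sum_mul (exp c) k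
  rw [mul_comm c, exp_nat_mul]
  simp_rw [← ENNReal.ofReal_pow (exp_pos c).le]
  rw [← ENNReal.ofReal_sum_of_nonneg fun n _ => by positivity, ← ENNReal.ofReal_mul hc1,
    ← ENNReal.ofReal_one, ← ENNReal.ofReal_add zero_le_one (by positivity)]
  congr 1
  linarith

lemma lintegral_exp_mul_le_one_add_tsum {ν : Ω → ℕ} {A : ℕ → Set Ω}
    (hA : ∀ n, MeasurableSet (A n)) (hνA : ∀ n ω, n < ν ω → ω ∈ A n) {c : ℝ} (hc : 0 ≤ c) :
    ∫⁻ ω, ENNReal.ofReal (exp (c * ν ω)) ∂P ≤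
      1 + ENNReal.ofReal (exp c - 1) * ∑' n, ENNReal.ofReal (exp c) ^ n * P (A n) := by
  set q := ENNReal.ofReal (exp c)
  have hpt : ∀ ω, ENNReal.ofReal (exp (c * ν ω)) ≤
      1 + ENNReal.ofReal (exp c - 1) * ∑' n, q ^ n * (A n).indicator 1 ω := fun ω => by
    rw [ofReal_exp_mul_natCast_eq hc]
    gcongr
    calc ∑ n ∈ range (ν ω), q ^ n
        = ∑ n ∈ range (ν ω), q ^ n * (A n).indicator 1 ω :=
          sum_congr rfl fun n hn => by
            rw [Set.indicator_of_mem (hνA n ω (mem_range.mp hn)), Pi.one_apply, mul_one]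
      _ ≤ _ := ENNReal.sum_le_tsum _
  refine (lintegral_mono hpt).trans_eq ?_
  rw [lintegral_add_left measurable_const, lintegral_one, measure_univ,
    lintegral_const_mul' _ _ ENNReal.ofReal_ne_top,
    lintegral_tsum fun n => ((measurable_one.indicator (hA n)).const_mul _).aemeasurable]
  congr 2
  refine tsum_congr fun n => ?_
  rw [lintegral_const_mul _ (measurable_one.indicator (hA n)), lintegral_indicator_one (hA n)]

lemma ofReal_exp_sub_one_mul_tsum_le {c C : ℝ} (hc : 0 ≤ c) (hC : 0 ≤ C) {p : ℕ → ℝ≥0∞}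
    (hp : ∀ n, p n ≤ ENNReal.ofReal (C * exp (-(2 * c)) ^ n)) :
    ENNReal.ofReal (exp c - 1) * ∑' n, ENNReal.ofReal (exp c) ^ n * p n ≤
      ENNReal.ofReal (C * exp c) := by
  rcases hc.eq_or_lt with rfl | hc
  · simp
  have hr : exp (-c) < 1 := exp_lt_one_iff.mpr (neg_lt_zero.mpr hc)
  have hterm : ∀ n, ENNReal.ofReal (exp c) ^ n * p n ≤ ENNReal.ofReal (C * exp (-c) ^ n) := by
    intro n
    calc ENNReal.ofReal (exp c) ^ n * p n
        ≤ ENNReal.ofReal (exp c ^ n * (C * exp (-(2 * c)) ^ n)) := by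
          rw [ENNReal.ofReal_mul (by positivity), ENNReal.ofReal_pow (exp_pos c).le]
          gcongr
          exact hp n
      _ = ENNReal.ofReal (C * exp (-c) ^ n) := by
          rw [mul_left_comm, ← mul_pow, ← exp_add]; ring_nf
  calc ENNReal.ofReal (exp c - 1) * ∑' n, ENNReal.ofReal (exp c) ^ n * p n
      ≤ ENNReal.ofReal (exp c - 1) * ∑' n, ENNReal.ofReal (C * exp (-c) ^ n) := by
        gcongr with n; exact hterm n
    _ = ENNReal.ofReal ((exp c - 1) * (C * (1 - exp (-c))⁻¹)) := by
        rw [← ENNReal.ofReal_tsum_of_nonneg (fun n => by positivity)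
            ((summable_geometric_of_lt_one (exp_pos _).le hr).mul_left C),
          tsum_mul_left, tsum_geometric_of_lt_one (exp_pos _).le hr,
          ← ENNReal.ofReal_mul (by linarith [one_le_exp hc.le])]
    _ = ENNReal.ofReal (C * exp c) := by
        congr 1
        have : exp c - 1 ≠ 0 := by linarith [add_one_lt_exp hc.ne']
        rw [exp_neg]
        field_simp

lemma lintegral_exp_mul_le_of_measureReal_le {ν : Ω → ℕ} {A : ℕ → Set Ω}
    (hA : ∀ n, MeasurableSet (A n)) (hνA : ∀ n ω, n < ν ω → ω ∈ A n) {c C : ℝ} (hc : 0 ≤ c)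
    (hC : 0 ≤ C) (hPA : ∀ n, P.real (A n) ≤ C * exp (-(2 * c)) ^ n) :
    ∫⁻ ω, ENNReal.ofReal (exp (c * ν ω)) ∂P ≤ 1 + ENNReal.ofReal (C * exp c) :=
  (lintegral_exp_mul_le_one_add_tsum hA hνA hc).trans <| add_le_add le_rfl <|
    ofReal_exp_sub_one_mul_tsum_le hc hC fun n => by
      rw [← ofReal_measureReal]; exact ENNReal.ofReal_le_ofReal (hPA n)

lemma lintegral_exp_mul_firstPassage_le {ξ : ℕ → Ω → ℝ} (hmeas : ∀ i, Measurable (ξ i))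
    (hnonneg : ∀ i ω, 0 ≤ ξ i ω) (hindep : iIndepFun ξ P)
    (hident : ∀ i, IdentDistrib (ξ i) (ξ 0) P P) {s c K t : ℝ} (hs : 0 ≤ s) (hc : 0 ≤ c)
    (hsK : s * t ≤ K) (hφ : mgf (ξ 0) P (-s) ≤ exp (-(2 * c))) :
    ∫⁻ ω, ENNReal.ofReal (exp (c * firstPassage (fun n ω => ∑ i ∈ range n, ξ i ω) t ω)) ∂P ≤
      1 + ENNReal.ofReal (exp (K + c)) := by
  rw [exp_add]
  refine lintegral_exp_mul_le_of_measureReal_le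
    (fun n => measurableSet_le (measurable_sum _ fun i _ => hmeas i) measurable_const)
    (fun n ω => le_of_lt_firstPassage) hc (exp_pos K).le fun n => ?_
  calc P.real {ω | ∑ i ∈ range n, ξ i ω ≤ t}
      ≤ exp (s * t) * mgf (ξ 0) P (-s) ^ n :=
        measureReal_sum_le_le_exp_mul_mgf_pow hmeas hindep hident
          (integrable_exp_neg_mul_of_nonneg (hmeas 0).aemeasurable (.of_forall (hnonneg 0)) hs)
          hs t n
    _ ≤ exp K * exp (-(2 * c)) ^ n :=
        mul_le_mul (exp_le_exp.mpr hsK) (pow_le_pow_left₀ mgf_nonneg hφ n)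
          (pow_nonneg mgf_nonneg n) (exp_pos K).le

end Probability

theorem stmt14_general {Ω : Type*} [MeasurableSpace Ω] (P : Measure Ω) [IsProbabilityMeasure P]
    (α : ℝ) (hα : α ∈ Set.Ioo (0:ℝ) 1)
    (ℓ : ℝ → ℝ)
    (hℓsv : ∀ l : ℝ, 0 < l → Tendsto (fun t => ℓ (l * t) / ℓ t) atTop (nhds 1))
    (ξ : ℕ → Ω → ℝ) (hmeas : ∀ i, Measurable (ξ i))
    (hpos : ∀ i ω, 0 < ξ i ω)
    (hindep : iIndepFun ξ P)
    (hident : ∀ i, Measure.map (ξ i) P = Measure.map (ξ 0) P)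
    (a : ℝ → ℝ) (ha : ∀ t, a t = (P {ω | t < ξ 0 ω}).toReal)
    (htail : Tendsto (fun t => a t / (t ^ (-α) * ℓ t)) atTop (nhds 1))
    (S : ℕ → Ω → ℝ) (hS : ∀ n ω, S n ω = ∑ i ∈ Finset.range n, ξ i ω)
    (ν : ℝ → Ω → ℕ) (hν : ∀ t ω, ν t ω = sInf {k : ℕ | t < S k ω}) :
    ∀ lam : ℝ, 0 < lam → ∃ B : ℝ≥0∞, B < ⊤ ∧ ∀ t : ℝ, 0 ≤ t →
      ∫⁻ ω, ENNReal.ofReal (Real.exp (lam * a t * (ν t ω : ℝ))) ∂P ≤ B := by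
  intro lam hlam
  obtain rfl : S = fun n ω => ∑ i ∈ range n, ξ i ω := funext fun n => funext (hS n)
  obtain rfl : ν = firstPassage fun n ω => ∑ i ∈ range n, ξ i ω := funext fun t => funext (hν t)
  obtain rfl : a = fun t => P.real {ω | t < ξ 0 ω} := funext ha
  have hreg : IsRegularlyVarying (fun t => P.real {ω | t < ξ 0 ω}) (-α) :=
    (IsRegularlyVarying.rpow_mul (fun l hl => by simpa using hℓsv l hl) _).of_tendsto_div htail
  obtain ⟨K, hK⟩ := exists_forall_mgf_neg_le_exp_neg_mul_tail (hmeas 0) (hpos 0) hreg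
    (neg_ne_zero.mpr hα.1.ne') (2 * lam)
  refine ⟨1 + ENNReal.ofReal (exp (K + lam)), by finiteness, fun t ht => ?_⟩
  obtain ⟨s, hs, hsK, hφ⟩ := hK t ht
  calc _ ≤ 1 + ENNReal.ofReal (exp (K + lam * P.real {ω | t < ξ 0 ω})) :=
        lintegral_exp_mul_firstPassage_le hmeas (fun i ω => (hpos i ω).le) hindep
          (fun i => ⟨(hmeas i).aemeasurable, (hmeas 0).aemeasurable, hident i⟩) hs
          (by positivity) hsK (by rwa [← mul_assoc])
    _ ≤ _ := by gcongr; nlinarith [measureReal_le_one (μ := P) (s := {ω | t < ξ 0 ω})]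

/-- Uniform exponential-moment bound for normalized first-passage times of a
random walk with heavy-tailed steps: if `P(ξ > t) ∼ t^{-α} ℓ(t)` with
`α ∈ (0,1)` and `ℓ` slowly varying, then
`sup_{t ≥ 0} E exp(λ P(ξ > t) ν(t)) < ∞` for every `λ > 0`. -/
theorem stmt14 {Ω : Type*} [MeasurableSpace Ω] (P : Measure Ω) [IsProbabilityMeasure P]
    (α : ℝ) (hα : α ∈ Set.Ioo (0:ℝ) 1)
    (ℓ : ℝ → ℝ) (hℓpos : ∀ t, 0 < t → 0 < ℓ t)
    (hℓsv : ∀ l : ℝ, 0 < l → Tendsto (fun t => ℓ (l * t) / ℓ t) atTop (nhds 1))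
    (ξ : ℕ → Ω → ℝ) (hmeas : ∀ i, Measurable (ξ i))
    (hpos : ∀ i ω, 0 < ξ i ω)
    (hindep : iIndepFun ξ P)
    (hident : ∀ i, Measure.map (ξ i) P = Measure.map (ξ 0) P)
    (a : ℝ → ℝ) (ha : ∀ t, a t = (P {ω | t < ξ 0 ω}).toReal)
    (htail : Tendsto (fun t => a t / (t ^ (-α) * ℓ t)) atTop (nhds 1))
    (S : ℕ → Ω → ℝ) (hS : ∀ n ω, S n ω = ∑ i ∈ Finset.range n, ξ i ω)
    (ν : ℝ → Ω → ℕ) (hν : ∀ t ω, ν t ω = sInf {k : ℕ | t < S k ω}) :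
    ∀ lam : ℝ, 0 < lam → ∃ B : ℝ≥0∞, B < ⊤ ∧ ∀ t : ℝ, 0 ≤ t →
      ∫⁻ ω, ENNReal.ofReal (Real.exp (lam * a t * (ν t ω : ℝ))) ∂P ≤ B :=
  stmt14_general P α hα ℓ hℓsv ξ hmeas hpos hindep hident a ha htail S hS ν hν
end

section
/- Let α ∈ (0,1), β ∈ ℝ, and let Y = (Y(u))_{u≥0} be defined by Y(u) = ∫_{[0,u]} (u−y)^β dW_α(y), where W_α is an inverse α-stable subordinator (which is self-similar of index α). Then Y is self-similar of index α+β: for every c > 0, the finite-dimensional distributions of (Y(cu))_{u≥0} coincide with those of (c^{α+β} Y(u))_{u≥0}. -/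
/-!
Substituting `y = c z` gives `Y(cu) = c^β ∫_{[0,u]} (u - z)^β dW(cz)`, while
`c^(α+β) Y(u) = c^β ∫_{[0,u]} (u - z)^β d(c^α W)(z)`. Both sides are therefore the same measurable
functional of the random Stieltjes functions `W(c ·)` and `c^α W`, so it suffices that these have
the same law. By right continuity a Stieltjes function is determined by its values at rational
points; on the σ-algebra of rational evaluations the Stieltjes measure depends measurably on the
function, and a law on it is determined by its finite-dimensional distributions, which agree by the
self-similarity of `W`.
-/

open MeasureTheory Set
open scoped ENNReal NNReal

theorem MeasureTheory.Measure.map_eq_map_of_forall_fin {Ω ι E : Type*} [MeasurableSpace Ω]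
    [MeasurableSpace E] {P : Measure Ω} [IsFiniteMeasure P] {X Y : Ω → ι → E}
    (hX : Measurable X) (hY : Measurable Y)
    (h : ∀ n (u : Fin n → ι), P.map (fun ω i ↦ X ω (u i)) = P.map (fun ω i ↦ Y ω (u i))) :
    P.map X = P.map Y := by
  have hrestrict : ∀ Z : Ω → ι → E, Measurable Z → ∀ I : Finset ι,
      (P.map Z).map I.restrict = (P.map fun ω j ↦ Z ω (I.equivFin.symm j)).map
        fun x (i : I) ↦ x (I.equivFin i) := by
    intro Z hZ I
    rw [Measure.map_map (Finset.measurable_restrict I) hZ,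
      Measure.map_map (by fun_prop) (by fun_prop)]
    congr 1
    funext ω i
    simp [Finset.restrict]
  refine IsProjectiveLimit.unique (P := fun I ↦ (P.map X).map I.restrict)
    (fun _ ↦ rfl) fun I ↦ ?_
  dsimp only
  rw [hrestrict X hX, hrestrict Y hY, h]

namespace StieltjesFunction

def compMul (f : StieltjesFunction ℝ) {c : ℝ} (hc : 0 < c) : StieltjesFunction ℝ where
  toFun x := f (c * x)
  mono' := f.mono.comp (monotone_id.const_mul hc.le)
  right_continuous' x := (f.right_continuous (c * x)).comp
    (continuous_const_mul c).continuousWithinAt fun _ hy ↦ mul_le_mul_of_nonneg_left hy hc.le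

@[simp] lemma compMul_apply (f : StieltjesFunction ℝ) {c : ℝ} (hc : 0 < c) (x : ℝ) :
    f.compMul hc x = f (c * x) := rfl

lemma measure_compMul (f : StieltjesFunction ℝ) {c : ℝ} (hc : 0 < c) :
    (f.compMul hc).measure = f.measure.map (· / c) := by
  refine Measure.ext_of_Ioc _ _ fun a b _ ↦ ?_
  have hpre : (· / c) ⁻¹' Ioc a b = Ioc (c * a) (c * b) := by
    ext y
    simp only [mem_preimage, mem_Ioc, lt_div_iff₀ hc, div_le_iff₀ hc, mul_comm c]
  rw [Measure.map_apply (by fun_prop) measurableSet_Ioc, hpre, measure_Ioc, measure_Ioc,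
    compMul_apply, compMul_apply]

instance instMeasurableSpace : MeasurableSpace (StieltjesFunction ℝ) :=
  .comap (fun f (q : ℚ) ↦ f q) inferInstance

lemma measurable_apply_rat (q : ℚ) : Measurable fun f : StieltjesFunction ℝ ↦ f q :=
  fun _ hs ↦ ⟨_, measurable_pi_apply q hs, rfl⟩

lemma measurable_of_forall_rat {α : Type*} [MeasurableSpace α] {F : α → StieltjesFunction ℝ}
    (hF : ∀ q : ℚ, Measurable fun a ↦ F a q) : Measurable F := by
  rintro _ ⟨t, ht, rfl⟩
  exact measurable_pi_lambda _ hF ht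

lemma measurable_measure_of_forall_rat {α : Type*} [MeasurableSpace α]
    {f : α → StieltjesFunction ℝ} (hf : ∀ q : ℚ, Measurable fun a ↦ f a q) :
    Measurable fun a ↦ (f a).measure := by
  have hIoc : ∀ n : ℤ, Measurable fun a ↦ (f a).measure.restrict (Ioc n (n + 1)) := by
    intro n
    have (a : α) : IsFiniteMeasure ((f a).measure.restrict (Ioc n (n + 1))) :=
      isFiniteMeasure_restrict.2 measure_Ioc_lt_top.ne
    refine .measure_of_isPiSystem (Real.borel_eq_generateFrom_Iic_rat ▸ BorelSpace.measurable_eq)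
      Real.isPiSystem_Iic_rat ?_ ?_
    · simp only [mem_iUnion, mem_singleton_iff]
      rintro _ ⟨q, rfl⟩
      have hIic (a : α) : (f a).measure.restrict (Ioc n (n + 1)) (Iic q) =
          ENNReal.ofReal (f a ((min (n + 1) q : ℚ) : ℝ) - f a ((n : ℚ) : ℝ)) := by
        rw [Measure.restrict_apply measurableSet_Iic, inter_comm, Ioc_inter_Iic, measure_Ioc]
        push_cast
        rfl
      simp_rw [hIic]
      exact ((hf _).sub (hf _)).ennreal_ofReal
    · simp_rw [Measure.restrict_apply_univ, measure_Ioc]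
      exact_mod_cast ((hf (n + 1)).sub (hf n)).ennreal_ofReal
  have hdisj := pairwise_disjoint_Ioc_add_intCast (0 : ℝ)
  simp only [zero_add] at hdisj
  refine Measure.measurable_of_measurable_coe _ fun s hs ↦ ?_
  have hsum : ∀ a, (f a).measure s = ∑' n : ℤ, (f a).measure.restrict (Ioc n (n + 1)) s := by
    intro a
    rw [← Measure.sum_apply _ hs, ← Measure.restrict_iUnion hdisj fun _ ↦ measurableSet_Ioc,
      iUnion_Ioc_intCast, Measure.restrict_univ]
  simp_rw [hsum]
  exact .tsum fun n ↦ (Measure.measurable_coe hs).comp (hIoc n)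

lemma map_eq_map_of_forall_fin {Ω : Type*} [MeasurableSpace Ω] {P : Measure Ω}
    [IsFiniteMeasure P] {V₁ V₂ : Ω → StieltjesFunction ℝ}
    (h₁ : ∀ q : ℚ, Measurable fun ω ↦ V₁ ω q) (h₂ : ∀ q : ℚ, Measurable fun ω ↦ V₂ ω q)
    (h : ∀ n (u : Fin n → ℚ),
      P.map (fun ω i ↦ V₁ ω (u i)) = P.map (fun ω i ↦ V₂ ω (u i))) :
    P.map V₁ = P.map V₂ := by
  have hrat : P.map (fun ω (q : ℚ) ↦ V₁ ω q) = P.map (fun ω (q : ℚ) ↦ V₂ ω q) :=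
    Measure.map_eq_map_of_forall_fin (measurable_pi_lambda _ h₁) (measurable_pi_lambda _ h₂) h
  ext s ⟨t, ht, rfl⟩
  have hst := congr_arg (· t) hrat
  rw [Measure.map_apply (measurable_pi_lambda _ h₁) ht,
    Measure.map_apply (measurable_pi_lambda _ h₂) ht] at hst
  rwa [Measure.map_apply (measurable_of_forall_rat h₁) ⟨t, ht, rfl⟩,
    Measure.map_apply (measurable_of_forall_rat h₂) ⟨t, ht, rfl⟩]

noncomputable def fracIntegral (f : StieltjesFunction ℝ) (β x : ℝ) : ℝ≥0∞ :=
  ∫⁻ y in Icc 0 x, ENNReal.ofReal ((x - y) ^ β) ∂f.measure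

lemma measurable_fracIntegral (β x : ℝ) :
    Measurable fun f : StieltjesFunction ℝ ↦ f.fracIntegral β x := by
  simp_rw [fracIntegral, ← lintegral_indicator measurableSet_Icc]
  exact (Measure.measurable_lintegral (Measurable.indicator (by fun_prop) measurableSet_Icc)).comp
    (measurable_measure_of_forall_rat measurable_apply_rat)

lemma fracIntegral_smul (f : StieltjesFunction ℝ) (r : ℝ≥0) (β x : ℝ) :
    (r • f).fracIntegral β x = r * f.fracIntegral β x := by
  rw [fracIntegral, measure_smul, Measure.restrict_smul, lintegral_smul_measure]
  rfl

lemma fracIntegral_mul_eq_compMul (f : StieltjesFunction ℝ) {c : ℝ} (hc : 0 < c) (β x : ℝ) :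
    f.fracIntegral β (c * x) = ENNReal.ofReal (c ^ β) * (f.compMul hc).fracIntegral β x := by
  have hpre : (· / c) ⁻¹' Icc 0 x = Icc 0 (c * x) := by
    ext y
    simp only [mem_preimage, mem_Icc, le_div_iff₀ hc, div_le_iff₀ hc, zero_mul, mul_comm c]
  rw [fracIntegral, fracIntegral, measure_compMul,
    setLIntegral_map measurableSet_Icc (by fun_prop) (by fun_prop), hpre,
    ← lintegral_const_mul' _ _ ENNReal.ofReal_ne_top]
  refine setLIntegral_congr_fun measurableSet_Icc fun y hy ↦ ?_
  have hxy : 0 ≤ x - y / c := sub_nonneg.2 ((div_le_iff₀ hc).2 (by linarith [hy.2]))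
  rw [← ENNReal.ofReal_mul (by positivity), ← Real.mul_rpow hc.le hxy, mul_sub,
    mul_div_cancel₀ _ hc.ne']

end StieltjesFunction

theorem stmt16_general {Ω : Type*} [MeasurableSpace Ω] (P : Measure Ω) [IsProbabilityMeasure P]
    (α β : ℝ)
    (W : Ω → StieltjesFunction ℝ)
    (hWmeas : ∀ u : ℝ, Measurable fun ω => W ω u)
    (hWss : ∀ c : ℝ, 0 < c → ∀ n : ℕ, ∀ u : Fin n → ℝ,
      Measure.map (fun ω => fun i => W ω (c * u i)) P =
        Measure.map (fun ω => fun i => c ^ α * W ω (u i)) P)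
    (Y : ℝ → Ω → ℝ≥0∞)
    (hY : ∀ u : ℝ, ∀ ω, Y u ω =
      ∫⁻ y in Set.Icc 0 u, ENNReal.ofReal ((u - y) ^ β) ∂(W ω).measure) :
    ∀ c : ℝ, 0 < c → ∀ n : ℕ, ∀ u : Fin n → ℝ,
      Measure.map (fun ω => fun i => Y (c * u i) ω) P =
        Measure.map (fun ω => fun i => ENNReal.ofReal (c ^ (α + β)) * Y (u i) ω) P := by
  intro c hc n u
  let V₁ ω := (W ω).compMul hc
  let V₂ ω := (c ^ α).toNNReal • W ω
  have hcα : 0 ≤ c ^ α := (Real.rpow_pos_of_pos hc α).le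
  have hV₂_apply (ω : Ω) (x : ℝ) : V₂ ω x = c ^ α * W ω x :=
    congrArg (· * W ω x) (Real.coe_toNNReal _ hcα)
  have hV₁ (x : ℝ) : Measurable fun ω ↦ V₁ ω x := hWmeas _
  have hV₂ (x : ℝ) : Measurable fun ω ↦ V₂ ω x := by
    simpa only [hV₂_apply] using (hWmeas x).const_mul _
  have hlaw : P.map V₁ = P.map V₂ :=
    StieltjesFunction.map_eq_map_of_forall_fin (fun q ↦ hV₁ q) (fun q ↦ hV₂ q) fun m v ↦ by
      simpa only [V₁, StieltjesFunction.compMul_apply, hV₂_apply] using hWss c hc m fun i ↦ v i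
  let Φ (f : StieltjesFunction ℝ) (i : Fin n) := ENNReal.ofReal (c ^ β) * f.fracIntegral β (u i)
  have hΦ : Measurable Φ :=
    measurable_pi_lambda _ fun i ↦ (StieltjesFunction.measurable_fracIntegral β (u i)).const_mul _
  have hY₁ : (fun ω i ↦ Y (c * u i) ω) = Φ ∘ V₁ := by
    funext ω i
    exact (hY _ ω).trans ((W ω).fracIntegral_mul_eq_compMul hc β (u i))
  have hY₂ : (fun ω i ↦ ENNReal.ofReal (c ^ (α + β)) * Y (u i) ω) = Φ ∘ V₂ := by
    funext ω i
    change _ = ENNReal.ofReal (c ^ β) * (V₂ ω).fracIntegral β (u i)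
    rw [hY, StieltjesFunction.fracIntegral_smul, Real.rpow_add hc, ENNReal.ofReal_mul hcα,
      mul_assoc]
    exact mul_left_comm _ _ _
  rw [hY₁, hY₂, ← Measure.map_map hΦ (StieltjesFunction.measurable_of_forall_rat fun q ↦ hV₁ q),
    ← Measure.map_map hΦ (StieltjesFunction.measurable_of_forall_rat fun q ↦ hV₂ q), hlaw]

/-- Self-similarity of the fractionally integrated inverse stable subordinator:
if `W` has nondecreasing right-continuous paths vanishing on `(-∞,0]` and is
self-similar of index `α` (in the sense of finite-dimensional distributions),
then `Y(u) = ∫_{[0,u]}(u-y)^β dW(y)` (with value `+∞` where the integral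
diverges) is self-similar of index `α + β`. -/
theorem stmt16 {Ω : Type*} [MeasurableSpace Ω] (P : Measure Ω) [IsProbabilityMeasure P]
    (α β : ℝ) (hα : α ∈ Set.Ioo (0:ℝ) 1)
    (W : Ω → StieltjesFunction ℝ)
    (hW0 : ∀ ω, ∀ u : ℝ, u ≤ 0 → W ω u = 0)
    (hWmeas : ∀ u : ℝ, Measurable fun ω => W ω u)
    (hWss : ∀ c : ℝ, 0 < c → ∀ n : ℕ, ∀ u : Fin n → ℝ,
      Measure.map (fun ω => fun i => W ω (c * u i)) P =
        Measure.map (fun ω => fun i => c ^ α * W ω (u i)) P)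
    (Y : ℝ → Ω → ℝ≥0∞)
    (hY : ∀ u : ℝ, ∀ ω, Y u ω =
      ∫⁻ y in Set.Icc 0 u, ENNReal.ofReal ((u - y) ^ β) ∂(W ω).measure) :
    ∀ c : ℝ, 0 < c → ∀ n : ℕ, ∀ u : Fin n → ℝ,
      Measure.map (fun ω => fun i => Y (c * u i) ω) P =
        Measure.map (fun ω => fun i => ENNReal.ofReal (c ^ (α + β)) * Y (u i) ω) P :=
  stmt16_general P α β W hWmeas hWss Y hY
end
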